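/- For positive integers n, m, r, k with k < n, the number of permutations σ of [n] with exactly m r-excedances, last value σ(n) = k, and σ⁻¹(n) > n − r equals (r−1) times the number of permutations of [n−1] with exactly m r-excedances ending in k. -/

import Mathlib

/-- Number of `r`-descents of a permutation `σ` of `[n]` (positions `i < n` with
`σ(i) ≥ σ(i+1) + r`), encoded on `Fin n`. -/
def rDesc (n r : ℕ) (σ : Equiv.Perm (Fin n)) : ℕ :=
  (Finset.univ.filter fun i : Fin n =>
    (if h : (i : ℕ) + 1 < n then ((σ ⟨(i : ℕ) + 1, h⟩ : Fin n) : ℕ) else n) + r ≤ (σ i : ℕ)).card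

/-- Number of `r`-excedances of a permutation `σ` of `[n]` (positions `i ≤ n` with
`σ(i) ≥ i + r`), encoded on `Fin n`. -/
def rExc (n r : ℕ) (σ : Equiv.Perm (Fin n)) : ℕ :=
  (Finset.univ.filter fun i : Fin n => (i : ℕ) + r ≤ (σ i : ℕ)).card

/-- The last value `σ(n)` of a permutation of `[n]` (as an element of `{1,…,n}`). -/
def lastVal (n : ℕ) (σ : Equiv.Perm (Fin n)) : ℕ :=
  if h : 0 < n then ((σ ⟨n - 1, Nat.sub_lt h Nat.one_pos⟩ : Fin n) : ℕ) + 1 else 0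

/-- `Ar r n m k` = number of permutations of `[n]` with exactly `m` `r`-descents
whose last value is `k`. -/
def Ar (r n m k : ℕ) : ℕ :=
  (Finset.univ.filter fun σ : Equiv.Perm (Fin n) => rDesc n r σ = m ∧ lastVal n σ = k).card

/-- The position (in `{1,…,n}`) of the value `n` in `σ`. -/
def posTop (n : ℕ) (σ : Equiv.Perm (Fin n)) : ℕ :=
  if h : 0 < n then ((σ⁻¹ ⟨n - 1, Nat.sub_lt h Nat.one_pos⟩ : Fin n) : ℕ) + 1 else 0

/-!
If the value `n` sits at a position `p > n - r`, no position `i ≥ p` can be an `r`-excedance,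
because `i + r > n`. So removing `n`, moving the value at position `n - 1` into position `p` and
the last value into position `n - 1` keeps both the `r`-excedances and the last value; for each
of the `r - 1` positions `n - r < p < n` this is a bijection onto the permutations of `[n - 1]`.
(If `r ≥ n` there are fewer positions, but then no permutation of `[n - 1]` has an
`r`-excedance.)
-/

open Equiv Finset

namespace Equiv.Perm

variable {N : ℕ}

def extendLast (σ : Perm (Fin N)) : Perm (Fin (N + 1)) :=
  permCongr finSuccEquivLast.symm σ.optionCongr

@[simp]
theorem extendLast_castSucc (σ : Perm (Fin N)) (i : Fin N) :
    extendLast σ i.castSucc = (σ i).castSucc := by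
  simp [extendLast]

@[simp]
theorem extendLast_last (σ : Perm (Fin N)) : extendLast σ (Fin.last N) = Fin.last N := by
  simp [extendLast]

theorem extendLast_injective : Function.Injective (extendLast (N := N)) := fun _ _ h =>
  Equiv.ext fun i => Fin.castSucc_injective _ <| by
    rw [← extendLast_castSucc, ← extendLast_castSucc, h]

theorem exists_extendLast_eq {τ : Perm (Fin (N + 1))} (h : τ (Fin.last N) = Fin.last N) :
    ∃ σ, extendLast σ = τ := by
  obtain ⟨E, hτ⟩ : ∃ E, permCongr finSuccEquivLast τ = E := ⟨_, rfl⟩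
  have hE : E none = none := by simp [← hτ, h]
  have hE' : (removeNone E).optionCongr = E := by
    simpa only [decomposeOption_symm_apply, decomposeOption_apply, hE, swap_self,
      ← Perm.one_def, one_mul] using decomposeOption.symm_apply_apply E
  refine ⟨removeNone E, ?_⟩
  rw [extendLast, hE', ← hτ, ← permCongr_symm, symm_apply_apply]

/-- Puts the top value at position `p`, the value `σ p` at position `N` and `σ N` at the last
position `N + 1`; all other positions keep their values. -/
def insertTop (p : Fin (N + 1)) (σ : Perm (Fin (N + 1))) : Perm (Fin (N + 2)) :=
  extendLast σ * swap (Fin.last N).castSucc (Fin.last (N + 1)) *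
    swap p.castSucc (Fin.last N).castSucc

variable (p : Fin (N + 1)) (σ : Perm (Fin (N + 1)))

theorem insertTop_castSucc_self : insertTop p σ p.castSucc = Fin.last (N + 1) := by
  simp [insertTop]

theorem insertTop_last : insertTop p σ (Fin.last (N + 1)) = (σ (Fin.last N)).castSucc := by
  rw [insertTop, mul_apply, mul_apply, swap_apply_of_ne_of_ne (Fin.castSucc_lt_last p).ne'
    (Fin.castSucc_lt_last _).ne', swap_apply_right, extendLast_castSucc]

theorem insertTop_castSucc_of_lt {i : Fin (N + 1)} (hi : i < p) :
    insertTop p σ i.castSucc = (σ i).castSucc := by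
  have hiN : i ≠ Fin.last N := (hi.trans_le p.le_last).ne
  simp [insertTop, swap_apply_of_ne_of_ne, hi.ne, hiN, Fin.castSucc_ne_last]

theorem insertTop_injective : Function.Injective (insertTop p) := fun _ _ h =>
  extendLast_injective (mul_right_cancel (mul_right_cancel h))

theorem exists_insertTop_eq {τ : Perm (Fin (N + 2))} (h : τ p.castSucc = Fin.last (N + 1)) :
    ∃ σ, insertTop p σ = τ := by
  obtain ⟨σ, hσ⟩ := exists_extendLast_eq (τ := τ * swap p.castSucc (Fin.last N).castSucc *
    swap (Fin.last N).castSucc (Fin.last (N + 1))) (by simp [h])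
  refine ⟨σ, ?_⟩
  simp only [insertTop, hσ, mul_assoc, swap_mul_self, mul_one]

end Equiv.Perm

open Perm

section

variable {N r : ℕ}

theorem lastVal_succ (σ : Perm (Fin (N + 1))) : lastVal (N + 1) σ = σ (Fin.last N) + 1 :=
  dif_pos N.succ_pos

theorem posTop_succ (σ : Perm (Fin (N + 1))) : posTop (N + 1) σ = σ⁻¹ (Fin.last N) + 1 :=
  dif_pos N.succ_pos

theorem posTop_succ_eq_iff (σ : Perm (Fin (N + 1))) (i : Fin (N + 1)) :
    posTop (N + 1) σ = i + 1 ↔ σ i = Fin.last N := by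
  rw [posTop_succ, Nat.add_right_cancel_iff, Fin.val_inj, inv_eq_iff_eq, eq_comm]

theorem posTop_lt_of_lastVal_lt {σ : Perm (Fin (N + 1))} (h : lastVal (N + 1) σ < N + 1) :
    posTop (N + 1) σ < N + 1 := by
  have hfix : σ⁻¹ (Fin.last N) ≠ Fin.last N := fun h' => by
    rw [inv_eq_iff_eq] at h'
    rw [lastVal_succ, ← h', Fin.val_last] at h
    omega
  rw [posTop_succ]
  exact Nat.succ_lt_succ (Fin.val_lt_last hfix)

theorem lt_of_rExc_ne_zero {σ : Perm (Fin N)} (h : rExc N r σ ≠ 0) : r < N := by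
  obtain ⟨i, hi⟩ := card_ne_zero.mp h
  have := (σ i).isLt
  simp only [mem_filter, mem_univ, true_and] at hi
  omega

theorem rExc_succ (hr : 1 ≤ r) (σ : Perm (Fin (N + 1))) :
    rExc (N + 1) r σ = #{i : Fin N | i + r ≤ σ i.castSucc} := by
  have hlast : ¬ N + r ≤ σ (Fin.last N) := by have := (σ (Fin.last N)).isLt; omega
  rw [rExc, card_filter, Fin.sum_univ_castSucc, card_filter]
  simp [hlast]

theorem rExc_insertTop {p : Fin (N + 1)} (hp : N + 2 ≤ p + r) (σ : Perm (Fin (N + 1))) :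
    rExc (N + 2) r (insertTop p σ) = rExc (N + 1) r σ := by
  rw [rExc_succ (by omega), rExc]
  refine congrArg card (filter_congr fun i _ => ?_)
  rcases lt_or_ge i p with hi | hi
  · rw [insertTop_castSucc_of_lt p σ hi, Fin.val_castSucc]
  · have := (insertTop p σ i.castSucc).isLt
    have := (σ i).isLt
    have : (p : ℕ) ≤ i := hi
    omega

theorem lastVal_insertTop (p : Fin (N + 1)) (σ : Perm (Fin (N + 1))) :
    lastVal (N + 2) (insertTop p σ) = lastVal (N + 1) σ := by
  rw [lastVal_succ, lastVal_succ, insertTop_last, Fin.val_castSucc]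

theorem card_rExc_lastVal_posTop_eq (m k : ℕ) {j : ℕ} (hj : N + 2 - r < j) (hjN : j < N + 2) :
    #{τ : Perm (Fin (N + 2)) | rExc (N + 2) r τ = m ∧ lastVal (N + 2) τ = k ∧
        posTop (N + 2) τ = j} =
      #{σ : Perm (Fin (N + 1)) | rExc (N + 1) r σ = m ∧ lastVal (N + 1) σ = k} := by
  obtain ⟨p, rfl⟩ : ∃ p : Fin (N + 1), j = p + 1 := ⟨⟨j - 1, by omega⟩, by simp; omega⟩
  have hp : N + 2 ≤ p + r := by omega
  simp_rw [← Fin.val_castSucc p, posTop_succ_eq_iff]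
  symm
  refine card_bij (fun σ _ => insertTop p σ) (fun σ hσ => ?_)
    (fun _ _ _ _ h => insertTop_injective p h) (fun τ hτ => ?_)
  · simp only [mem_filter, mem_univ, true_and] at hσ ⊢
    rw [rExc_insertTop hp, lastVal_insertTop, insertTop_castSucc_self]
    exact ⟨hσ.1, hσ.2, rfl⟩
  · simp only [mem_filter, mem_univ, true_and] at hτ
    obtain ⟨σ, rfl⟩ := exists_insertTop_eq p hτ.2.2
    rw [rExc_insertTop hp, lastVal_insertTop] at hτ
    exact ⟨σ, by simp [hτ.1, hτ.2.1], rfl⟩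

end

theorem stmt7_general (n m r k : ℕ) (hm : 1 ≤ m) (hk : 1 ≤ k)
    (hkn : k < n) :
    (Finset.univ.filter fun σ : Equiv.Perm (Fin n) =>
        rExc n r σ = m ∧ lastVal n σ = k ∧ n - r < posTop n σ).card =
    (r - 1) *
      (Finset.univ.filter fun σ : Equiv.Perm (Fin (n - 1)) =>
        rExc (n - 1) r σ = m ∧ lastVal (n - 1) σ = k).card := by
  obtain ⟨N, rfl⟩ : ∃ N, n = N + 2 := ⟨n - 2, by omega⟩
  rw [show N + 2 - 1 = N + 1 from rfl,
    card_eq_sum_card_fiberwise (f := posTop (N + 2)) (t := Ioo (N + 2 - r) (N + 2)) ?maps,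
    sum_congr rfl fun j hj => ?fiber, sum_const, Nat.card_Ioo, smul_eq_mul]
  case maps =>
    intro τ hτ
    simp only [coe_filter, mem_univ, true_and, Set.mem_ofPred_eq] at hτ
    exact mem_Ioo.mpr ⟨hτ.2.2, posTop_lt_of_lastVal_lt (hτ.2.1.trans_lt hkn)⟩
  case fiber =>
    obtain ⟨hjr, hjN⟩ := mem_Ioo.mp hj
    rw [filter_filter]
    refine (congrArg card (filter_congr fun τ _ => ?_)).trans
      (card_rExc_lastVal_posTop_eq m k hjr hjN)
    exact ⟨fun h => ⟨h.1.1, h.1.2.1, h.2⟩, fun h => ⟨⟨h.1, h.2.1, h.2.2 ▸ hjr⟩, h.2.2⟩⟩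
  rcases eq_empty_or_nonempty {σ : Perm (Fin (N + 1)) | rExc (N + 1) r σ = m ∧
      lastVal (N + 1) σ = k} with hS | ⟨σ, hσ⟩
  · rw [hS, card_empty, mul_zero, mul_zero]
  · have := lt_of_rExc_ne_zero ((mem_filter.mp hσ).2.1.trans_ne (by omega))
    congr 1
    omega

/-- For `k < n`: the number of permutations of `[n]` with `m` `r`-excedances, last value
`k`, and `σ⁻¹(n) > n - r` is `(r-1)` times the number of permutations of `[n-1]` with `m`
`r`-excedances ending in `k`. -/
theorem stmt7 (n m r k : ℕ) (hn : 1 ≤ n) (hm : 1 ≤ m) (hr : 1 ≤ r) (hk : 1 ≤ k)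
    (hkn : k < n) :
    (Finset.univ.filter fun σ : Equiv.Perm (Fin n) =>
        rExc n r σ = m ∧ lastVal n σ = k ∧ n - r < posTop n σ).card =
    (r - 1) *
      (Finset.univ.filter fun σ : Equiv.Perm (Fin (n - 1)) =>
        rExc (n - 1) r σ = m ∧ lastVal (n - 1) σ = k).card :=
  stmt7_general n m r k hm hk hkn
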